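/- Let Π be a convex set of stochastic policies, ν a probability distribution on states, and ε ≥ 0. Assume π ∈ Π is an ε-local optimum of J_ν over Π, i.e., for all π' ∈ Π, lim_{α→0}(J_ν((1-α)π+απ') - J_ν(π))/α ≤ ε. Then for any optimal policy π_* (a policy whose value is v_*, with v_*(s) ≥ v_ρ(s) for all policies ρ and states s) and any probability distribution μ on states, 0 ≤ μ·(v_* - v_π) ≤ (1-γ)^{-1} · ‖d_{μ,π_*}/ν‖_∞ · (E_ν(Π)/(1-γ) + ε), where ‖d_{μ,π_*}/ν‖_∞ is the smallest constant C with d_{μ,π_*}(s) ≤ C ν(s) for all s (assumed finite). -/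

import Mathlib

open Matrix Filter Topology

section MDPdefs

variable {S A : Type*}

/-- `P` is a transition kernel: nonnegative and each row sums to one. -/
def IsKernel [Fintype S] (P : S → A → S → ℝ) : Prop :=
  ∀ s a, (∀ s', 0 ≤ P s a s') ∧ ∑ s', P s a s' = 1

/-- A stochastic policy: a probability distribution over actions in each state. -/
def IsPolicy [Fintype A] (π : S → A → ℝ) : Prop :=
  ∀ s, (∀ a, 0 ≤ π s a) ∧ ∑ a, π s a = 1

/-- A probability distribution over states. -/
def IsDist [Fintype S] (μ : S → ℝ) : Prop :=
  (∀ s, 0 ≤ μ s) ∧ ∑ s, μ s = 1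

/-- The reward vector `r_π(s) = ∑_a π(a|s) r(s,a)`. -/
def rPol [Fintype A] (r : S → A → ℝ) (π : S → A → ℝ) : S → ℝ :=
  fun s => ∑ a, π s a * r s a

/-- The stochastic matrix `P_π(s,s') = ∑_a π(a|s) P(s'|s,a)`. -/
def PPol [Fintype A] (P : S → A → S → ℝ) (π : S → A → ℝ) : Matrix S S ℝ :=
  Matrix.of fun s s' => ∑ a, π s a * P s a s'

/-- The Bellman operator `T_π v = r_π + γ P_π v`. -/
noncomputable def bellman [Fintype S] [Fintype A] (P : S → A → S → ℝ) (r : S → A → ℝ)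
    (γ : ℝ) (π : S → A → ℝ) (v : S → ℝ) : S → ℝ :=
  rPol r π + γ • (PPol P π *ᵥ v)

/-- The optimal Bellman operator `(Tv)(s) = max_a [r(s,a) + γ ∑_{s'} P(s'|s,a) v(s')]`. -/
noncomputable def optBellman [Fintype S] [Fintype A] [Nonempty A] (P : S → A → S → ℝ)
    (r : S → A → ℝ) (γ : ℝ) (v : S → ℝ) : S → ℝ :=
  fun s => Finset.univ.sup' Finset.univ_nonempty fun a => r s a + γ * ∑ s', P s a s' * v s'

/-- The value function of policy `π`, `v_π = (I - γ P_π)⁻¹ r_π`, the unique solution of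
`v = r_π + γ P_π v` when `0 ≤ γ < 1`. -/
noncomputable def valueFn [Fintype S] [Fintype A] [DecidableEq S] (P : S → A → S → ℝ)
    (r : S → A → ℝ) (γ : ℝ) (π : S → A → ℝ) : S → ℝ :=
  ((1 : Matrix S S ℝ) - γ • PPol P π)⁻¹ *ᵥ rPol r π

/-- The γ-weighted occupancy measure `d_{μ,π} = (1-γ) μ (I - γ P_π)⁻¹` (a row vector). -/
noncomputable def occ [Fintype S] [Fintype A] [DecidableEq S] (P : S → A → S → ℝ)
    (γ : ℝ) (μ : S → ℝ) (π : S → A → ℝ) : S → ℝ :=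
  (1 - γ) • (μ ᵥ* ((1 : Matrix S S ℝ) - γ • PPol P π)⁻¹)

/-- The stochastic mixture `(1-α)π + απ'`. -/
def mix (α : ℝ) (π π' : S → A → ℝ) : S → A → ℝ :=
  fun s a => (1 - α) * π s a + α * π' s a

/-- The `ν`-greedy-complexity `E_ν(Π) = sup_{ρ∈Π} inf_{ρ'∈Π} d_{ν,ρ}·(T v_ρ - T_{ρ'} v_ρ)`. -/
noncomputable def greedyCplx [Fintype S] [Fintype A] [Nonempty A] [DecidableEq S]
    (P : S → A → S → ℝ) (r : S → A → ℝ) (γ : ℝ) (ν : S → ℝ)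
    (Pol : Set (S → A → ℝ)) : ℝ :=
  ⨆ ρ : Pol, ⨅ ρ' : Pol,
    occ P γ ν (ρ : S → A → ℝ) ⬝ᵥ
      (optBellman P r γ (valueFn P r γ (ρ : S → A → ℝ)) -
        bellman P r γ (ρ' : S → A → ℝ) (valueFn P r γ (ρ : S → A → ℝ)))

/-- `π` is an `ε`-local optimum of `J_ν` over `Pol`: for every `π' ∈ Pol`, the (one-sided)
limit of `(ν·v_{(1-α)π+απ'} - ν·v_π)/α` as `α → 0⁺` exists and is at most `ε`. -/
def IsLocalOpt [Fintype S] [Fintype A] [DecidableEq S]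
    (P : S → A → S → ℝ) (r : S → A → ℝ) (γ : ℝ) (ν : S → ℝ)
    (Pol : Set (S → A → ℝ)) (π : S → A → ℝ) (ε : ℝ) : Prop :=
  ∀ π' ∈ Pol, ∃ L ≤ ε,
    Tendsto (fun α : ℝ =>
        (ν ⬝ᵥ valueFn P r γ (mix α π π') - ν ⬝ᵥ valueFn P r γ π) / α)
      (𝓝[>] 0) (𝓝 L)

end MDPdefs

/-!
By the performance difference lemma,
`μ·(v_* - v_π) = (1-γ)⁻¹ d_{μ,π_*}·(T_{π_*} v_π - v_π) ≤ (1-γ)⁻¹ C ν·(T v_π - v_π)`,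
using `T_{π_*} v_π ≤ T v_π`, `T v_π - v_π ≥ 0` and `d_{μ,π_*} ≤ C ν`. Applied to the mixtures
`(1-α)π + απ'`, whose Bellman operators are affine in `α`, the same lemma identifies the one-sided
derivative of `J_ν` at `π` towards `π'` as `(1-γ)⁻¹ d_{ν,π}·(T_{π'} v_π - v_π)`, which
`ε`-local optimality bounds by `ε`. As `d_{ν,π} ≥ (1-γ) ν`, this gives
`(1-γ) ν·(T v_π - v_π) ≤ d_{ν,π}·(T v_π - T_{π'} v_π) + (1-γ) ε` for every `π' ∈ Π`, and the
infimum over `π'` of the first term is at most `E_ν(Π)`.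
-/

namespace IsDist

variable {ι : Type*} [Fintype ι] {d : ι → ℝ}

theorem dotProduct_le (hd : IsDist d) {w : ι → ℝ} {c : ℝ} (hw : ∀ i, w i ≤ c) :
    d ⬝ᵥ w ≤ c :=
  calc d ⬝ᵥ w ≤ ∑ i, d i * c :=
        Finset.sum_le_sum fun i _ => mul_le_mul_of_nonneg_left (hw i) (hd.1 i)
    _ = c := by rw [← Finset.sum_mul, hd.2, one_mul]

theorem le_dotProduct (hd : IsDist d) {w : ι → ℝ} {c : ℝ} (hw : ∀ i, c ≤ w i) :
    c ≤ d ⬝ᵥ w :=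
  calc c = ∑ i, d i * c := by rw [← Finset.sum_mul, hd.2, one_mul]
    _ ≤ d ⬝ᵥ w := Finset.sum_le_sum fun i _ => mul_le_mul_of_nonneg_left (hw i) (hd.1 i)

theorem abs_dotProduct_le (hd : IsDist d) (w : ι → ℝ) : |d ⬝ᵥ w| ≤ ‖w‖ :=
  abs_le.2 ⟨hd.le_dotProduct fun i => neg_le_of_abs_le (norm_le_pi_norm w i),
    hd.dotProduct_le fun i => le_of_abs_le (norm_le_pi_norm w i)⟩

theorem one_le_of_le_smul (hd : IsDist d) {ν : ι → ℝ} (hν : IsDist ν) {C : ℝ}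
    (h : d ≤ C • ν) : 1 ≤ C :=
  calc 1 = ∑ i, d i := hd.2.symm
    _ ≤ ∑ i, C * ν i := Finset.sum_le_sum fun i _ => h i
    _ = C := by rw [← Finset.mul_sum, hν.2, mul_one]

end IsDist

namespace Matrix

variable {n : Type*} [Fintype n] [DecidableEq n] {M : Matrix n n ℝ}

theorem isDist_of_mem_rowStochastic (hM : M ∈ rowStochastic ℝ n) (i : n) : IsDist (M i) :=
  ⟨fun _ => nonneg_of_mem_rowStochastic hM, sum_row_of_mem_rowStochastic hM i⟩

theorem norm_mulVec_le_of_mem_rowStochastic (hM : M ∈ rowStochastic ℝ n) (v : n → ℝ) :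
    ‖M *ᵥ v‖ ≤ ‖v‖ :=
  (pi_norm_le_iff_of_nonneg (norm_nonneg v)).2 fun i =>
    (isDist_of_mem_rowStochastic hM i).abs_dotProduct_le v

variable {γ : ℝ}

theorem isUnit_det_one_sub_smul_of_mem_rowStochastic (hM : M ∈ rowStochastic ℝ n)
    (hγ : |γ| < 1) : IsUnit (1 - γ • M).det := by
  refine isUnit_iff_ne_zero.2 fun hdet => ?_
  obtain ⟨v, hv0, hv⟩ := exists_mulVec_eq_zero_iff.2 hdet
  have hfix : v = γ • (M *ᵥ v) := by
    rwa [sub_mulVec, one_mulVec, smul_mulVec, sub_eq_zero] at hv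
  have hle : ‖v‖ ≤ |γ| * ‖v‖ :=
    calc ‖v‖ = ‖γ • (M *ᵥ v)‖ := congrArg norm hfix
      _ = |γ| * ‖M *ᵥ v‖ := by rw [norm_smul, Real.norm_eq_abs]
      _ ≤ |γ| * ‖v‖ := by gcongr; exact norm_mulVec_le_of_mem_rowStochastic hM v
  exact hv0 (norm_eq_zero.1 (by nlinarith [norm_nonneg v]))

theorem inv_one_sub_smul_eq (hunit : IsUnit (1 - γ • M).det) :
    (1 - γ • M)⁻¹ = 1 + γ • (M * (1 - γ • M)⁻¹) := by
  have h := mul_nonsing_inv _ hunit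
  rwa [sub_mul, one_mul, smul_mul_assoc, sub_eq_iff_eq_add] at h

theorem inv_one_sub_smul_nonneg (hM : M ∈ rowStochastic ℝ n) (hγ0 : 0 ≤ γ) (hγ1 : γ < 1)
    (i j : n) : 0 ≤ (1 - γ • M)⁻¹ i j := by
  have hN := inv_one_sub_smul_eq
    (isUnit_det_one_sub_smul_of_mem_rowStochastic hM (abs_lt.2 ⟨by linarith, hγ1⟩))
  set N := (1 - γ • M)⁻¹
  have : Nonempty n := ⟨i⟩
  -- the minimum of column `j` is nonnegative since it dominates `γ` times itself
  obtain ⟨k, hk⟩ := Finite.exists_min fun i => N i j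
  have hNk : N k j = (1 : Matrix n n ℝ) k j + γ * (M k ⬝ᵥ fun i => N i j) := by
    conv_lhs => rw [hN]
    rfl
  have hMk : N k j ≤ M k ⬝ᵥ fun i => N i j := (isDist_of_mem_rowStochastic hM k).le_dotProduct hk
  have hone : 0 ≤ (1 : Matrix n n ℝ) k j := by
    rw [one_apply]; split_ifs <;> norm_num
  have hNk0 : 0 ≤ N k j := by nlinarith
  exact hNk0.trans (hk i)

theorem one_le_inv_one_sub_smul (hM : M ∈ rowStochastic ℝ n) (hγ0 : 0 ≤ γ) (hγ1 : γ < 1)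
    (i j : n) : (1 : Matrix n n ℝ) i j ≤ (1 - γ • M)⁻¹ i j := by
  have hN := inv_one_sub_smul_eq
    (isUnit_det_one_sub_smul_of_mem_rowStochastic hM (abs_lt.2 ⟨by linarith, hγ1⟩))
  have hMN : 0 ≤ (M * (1 - γ • M)⁻¹) i j :=
    Finset.sum_nonneg fun k _ =>
      mul_nonneg (nonneg_of_mem_rowStochastic hM) (inv_one_sub_smul_nonneg hM hγ0 hγ1 k j)
  conv_rhs => rw [hN]
  simp only [add_apply, smul_apply, smul_eq_mul]
  exact le_add_of_nonneg_right (mul_nonneg hγ0 hMN)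

theorem inv_one_sub_smul_mulVec_one (hM : M ∈ rowStochastic ℝ n) (hγ : |γ| < 1) :
    (1 - γ • M)⁻¹ *ᵥ 1 = (1 - γ)⁻¹ • (1 : n → ℝ) := by
  have hγ1 : 1 - γ ≠ 0 := by linarith [le_abs_self γ]
  have h : (1 - γ • M) *ᵥ 1 = (1 - γ) • (1 : n → ℝ) := by
    rw [sub_mulVec, one_mulVec, smul_mulVec, one_vecMul_of_mem_rowStochastic hM, sub_smul,
      one_smul]
  have h' := congrArg ((1 - γ • M)⁻¹ *ᵥ ·) h
  simp only [mulVec_mulVec, nonsing_inv_mul _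
    (isUnit_det_one_sub_smul_of_mem_rowStochastic hM hγ), one_mulVec, mulVec_smul] at h'
  calc (1 - γ • M)⁻¹ *ᵥ 1 = (1 - γ)⁻¹ • ((1 - γ) • (1 - γ • M)⁻¹ *ᵥ 1) := by
        rw [smul_smul, inv_mul_cancel₀ hγ1, one_smul]
    _ = (1 - γ)⁻¹ • 1 := by rw [← h']

end Matrix

section MDP

variable {S A : Type*} {P : S → A → S → ℝ} {r : S → A → ℝ} {γ : ℝ} {ρ : S → A → ℝ}

theorem mix_zero (π π' : S → A → ℝ) : mix 0 π π' = π := by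
  ext s a
  simp [mix]

variable [Fintype A]

theorem IsPolicy.mix {π π' : S → A → ℝ} (hπ : IsPolicy π) (hπ' : IsPolicy π') {α : ℝ}
    (hα0 : 0 ≤ α) (hα1 : α ≤ 1) : IsPolicy (mix α π π') := fun s =>
  ⟨fun a => add_nonneg (mul_nonneg (by linarith) ((hπ s).1 a)) (mul_nonneg hα0 ((hπ' s).1 a)),
    by simp only [_root_.mix, Finset.sum_add_distrib, ← Finset.mul_sum, (hπ s).2, (hπ' s).2]; ring⟩

theorem PPol_mix (α : ℝ) (π π' : S → A → ℝ) :
    PPol P (mix α π π') = (1 - α) • PPol P π + α • PPol P π' := by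
  ext s s'
  simp only [PPol, mix, Matrix.add_apply, Matrix.smul_apply, of_apply, smul_eq_mul,
    Finset.mul_sum, ← Finset.sum_add_distrib]
  exact Finset.sum_congr rfl fun a _ => by ring

variable [Fintype S]

theorem norm_rPol_le (hρ : IsPolicy ρ) : ‖rPol r ρ‖ ≤ ‖r‖ :=
  (pi_norm_le_iff_of_nonneg (norm_nonneg r)).2 fun s =>
    (IsDist.abs_dotProduct_le (hρ s) (r s)).trans (norm_le_pi_norm r s)

theorem bellman_mix (α : ℝ) (π π' : S → A → ℝ) (v : S → ℝ) :
    bellman P r γ (mix α π π') v = (1 - α) • bellman P r γ π v + α • bellman P r γ π' v := by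
  ext s
  simp only [bellman, PPol_mix, add_mulVec, smul_mulVec, rPol, mix, Pi.add_apply, Pi.smul_apply,
    smul_eq_mul, add_mul, Finset.sum_add_distrib, ← Finset.mul_sum, mul_assoc]
  ring

def actionValue (P : S → A → S → ℝ) (r : S → A → ℝ) (γ : ℝ) (v : S → ℝ) (s : S) (a : A) : ℝ :=
  r s a + γ * (P s a ⬝ᵥ v)

theorem bellman_apply (ρ : S → A → ℝ) (v : S → ℝ) (s : S) :
    bellman P r γ ρ v s = ρ s ⬝ᵥ actionValue P r γ v s := by
  simp only [bellman, rPol, PPol, actionValue, Pi.add_apply, Pi.smul_apply, smul_eq_mul, mulVec,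
    dotProduct, of_apply, mul_add, Finset.sum_add_distrib, Finset.mul_sum, Finset.sum_mul]
  rw [Finset.sum_comm]
  simp only [mul_left_comm, mul_assoc]

theorem bellman_le_optBellman [Nonempty A] (hρ : IsPolicy ρ) (v : S → ℝ) (s : S) :
    bellman P r γ ρ v s ≤ optBellman P r γ v s := by
  rw [bellman_apply]
  exact IsDist.dotProduct_le (hρ s) fun a => Finset.le_sup' _ (Finset.mem_univ a)

theorem abs_actionValue_le (hP : IsKernel P) (hγ0 : 0 ≤ γ) (v : S → ℝ) (s : S) (a : A) :
    |actionValue P r γ v s a| ≤ ‖r‖ + γ * ‖v‖ := by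
  refine (abs_add_le _ _).trans (add_le_add ?_ ?_)
  · exact (norm_le_pi_norm (r s) a).trans (norm_le_pi_norm r s)
  · rw [abs_mul, abs_of_nonneg hγ0]
    exact mul_le_mul_of_nonneg_left (IsDist.abs_dotProduct_le (hP s a) v) hγ0

theorem optBellman_sub_bellman_le [Nonempty A] (hP : IsKernel P) (hγ0 : 0 ≤ γ)
    (hρ : IsPolicy ρ) (v : S → ℝ) (s : S) :
    optBellman P r γ v s - bellman P r γ ρ v s ≤ 2 * (‖r‖ + γ * ‖v‖) := by
  have hle : optBellman P r γ v s ≤ ‖r‖ + γ * ‖v‖ :=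
    Finset.sup'_le _ _ fun a _ => le_of_abs_le (abs_actionValue_le hP hγ0 v s a)
  have hge : -(‖r‖ + γ * ‖v‖) ≤ bellman P r γ ρ v s := by
    rw [bellman_apply]
    exact IsDist.le_dotProduct (hρ s) fun a => neg_le_of_abs_le (abs_actionValue_le hP hγ0 v s a)
  linarith

variable [DecidableEq S]

theorem PPol_mem_rowStochastic (hP : IsKernel P) (hρ : IsPolicy ρ) :
    PPol P ρ ∈ rowStochastic ℝ S := by
  refine mem_rowStochastic_iff_sum.2 ⟨fun s s' => ?_, fun s => ?_⟩
  · exact Finset.sum_nonneg fun a _ => mul_nonneg ((hρ s).1 a) ((hP s a).1 s')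
  · simp only [PPol, of_apply]
    rw [Finset.sum_comm]
    simp only [← Finset.mul_sum, (hP s _).2, mul_one, (hρ s).2]

theorem isUnit_det_one_sub_smul_PPol (hP : IsKernel P) (hγ0 : 0 ≤ γ) (hγ1 : γ < 1)
    (hρ : IsPolicy ρ) : IsUnit (1 - γ • PPol P ρ).det :=
  isUnit_det_one_sub_smul_of_mem_rowStochastic (PPol_mem_rowStochastic hP hρ)
    (abs_lt.2 ⟨by linarith, hγ1⟩)

theorem one_sub_smul_PPol_mulVec_valueFn (hP : IsKernel P) (hγ0 : 0 ≤ γ) (hγ1 : γ < 1)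
    (hρ : IsPolicy ρ) : (1 - γ • PPol P ρ) *ᵥ valueFn P r γ ρ = rPol r ρ := by
  rw [valueFn, mulVec_mulVec, mul_nonsing_inv _ (isUnit_det_one_sub_smul_PPol hP hγ0 hγ1 hρ),
    one_mulVec]

theorem bellman_valueFn (hP : IsKernel P) (hγ0 : 0 ≤ γ) (hγ1 : γ < 1) (hρ : IsPolicy ρ) :
    bellman P r γ ρ (valueFn P r γ ρ) = valueFn P r γ ρ := by
  have h := one_sub_smul_PPol_mulVec_valueFn (r := r) hP hγ0 hγ1 hρ
  rw [sub_mulVec, one_mulVec, smul_mulVec, sub_eq_iff_eq_add] at h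
  rw [bellman, ← h]

theorem norm_valueFn_le (hP : IsKernel P) (hγ0 : 0 ≤ γ) (hγ1 : γ < 1) (hρ : IsPolicy ρ) :
    ‖valueFn P r γ ρ‖ ≤ ‖r‖ / (1 - γ) := by
  set v := valueFn P r γ ρ
  have h : ‖v‖ ≤ ‖r‖ + γ * ‖v‖ :=
    calc ‖v‖ = ‖rPol r ρ + γ • (PPol P ρ *ᵥ v)‖ := by rw [← bellman, bellman_valueFn hP hγ0 hγ1 hρ]
      _ ≤ ‖r‖ + γ * ‖v‖ := by
        refine (norm_add_le _ _).trans (add_le_add (norm_rPol_le hρ) ?_)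
        rw [norm_smul, Real.norm_of_nonneg hγ0]
        exact mul_le_mul_of_nonneg_left
          (norm_mulVec_le_of_mem_rowStochastic (PPol_mem_rowStochastic hP hρ) v) hγ0
  rw [le_div_iff₀ (by linarith)]
  linarith

theorem one_sub_smul_le_occ (hP : IsKernel P) (hγ0 : 0 ≤ γ) (hγ1 : γ < 1) (hρ : IsPolicy ρ)
    {μ : S → ℝ} (hμ : 0 ≤ μ) : (1 - γ) • μ ≤ occ P γ μ ρ := by
  intro s
  refine mul_le_mul_of_nonneg_left ?_ (by linarith)
  calc μ s = (μ ᵥ* 1) s := by rw [vecMul_one]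
    _ ≤ (μ ᵥ* (1 - γ • PPol P ρ)⁻¹) s := Finset.sum_le_sum fun s' _ =>
        mul_le_mul_of_nonneg_left
          (one_le_inv_one_sub_smul (PPol_mem_rowStochastic hP hρ) hγ0 hγ1 s' s) (hμ s')

theorem isDist_occ (hP : IsKernel P) (hγ0 : 0 ≤ γ) (hγ1 : γ < 1) (hρ : IsPolicy ρ)
    {μ : S → ℝ} (hμ : IsDist μ) : IsDist (occ P γ μ ρ) := by
  refine ⟨fun s => ?_, ?_⟩
  · exact (mul_nonneg (by linarith) (hμ.1 s)).trans
      (one_sub_smul_le_occ hP hγ0 hγ1 hρ hμ.1 s)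
  · rw [← dotProduct_one, occ, smul_dotProduct, ← dotProduct_mulVec,
      inv_one_sub_smul_mulVec_one (PPol_mem_rowStochastic hP hρ) (abs_lt.2 ⟨by linarith, hγ1⟩),
      dotProduct_smul, dotProduct_one, hμ.2, smul_eq_mul, smul_eq_mul, mul_one,
      mul_inv_cancel₀ (by linarith)]

theorem performance_difference (hP : IsKernel P) (hγ0 : 0 ≤ γ) (hγ1 : γ < 1)
    {π : S → A → ℝ} (hρ : IsPolicy ρ) (μ : S → ℝ) :
    μ ⬝ᵥ (valueFn P r γ ρ - valueFn P r γ π)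
      = (1 - γ)⁻¹ * (occ P γ μ ρ ⬝ᵥ (bellman P r γ ρ (valueFn P r γ π) - valueFn P r γ π)) := by
  set M := 1 - γ • PPol P ρ
  set vπ := valueFn P r γ π
  have hM : M *ᵥ (valueFn P r γ ρ - vπ) = bellman P r γ ρ vπ - vπ := by
    rw [mulVec_sub, one_sub_smul_PPol_mulVec_valueFn hP hγ0 hγ1 hρ, sub_mulVec, one_mulVec,
      smul_mulVec, bellman]
    abel
  have hdiff : valueFn P r γ ρ - vπ = M⁻¹ *ᵥ (bellman P r γ ρ vπ - vπ) := by
    rw [← hM, mulVec_mulVec, nonsing_inv_mul _ (isUnit_det_one_sub_smul_PPol hP hγ0 hγ1 hρ),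
      one_mulVec]
  rw [hdiff, dotProduct_mulVec, occ, smul_dotProduct, smul_eq_mul, ← mul_assoc,
    inv_mul_cancel₀ (by linarith), one_mul]

theorem tendsto_occ_mix (hP : IsKernel P) (hγ0 : 0 ≤ γ) (hγ1 : γ < 1) {π : S → A → ℝ}
    (hπ : IsPolicy π) (π' : S → A → ℝ) (ν : S → ℝ) :
    Tendsto (fun α => occ P γ ν (mix α π π')) (𝓝 0) (𝓝 (occ P γ ν π)) := by
  have hcont : Continuous fun α : ℝ => 1 - γ • PPol P (mix α π π') := by
    simp only [PPol_mix]
    fun_prop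
  have hinv : ContinuousAt (fun α : ℝ => (1 - γ • PPol P (mix α π π'))⁻¹) 0 := by
    refine ContinuousAt.comp ?_ hcont.continuousAt
    rw [mix_zero]
    exact continuousAt_matrix_inv _
      (NormedRing.inverse_continuousAt (isUnit_det_one_sub_smul_PPol hP hγ0 hγ1 hπ).unit)
  have hvecMul : Continuous fun N : Matrix S S ℝ => (1 - γ) • (ν ᵥ* N) :=
    (continuous_const.matrix_vecMul continuous_id).const_smul (1 - γ)
  have h := (hvecMul.continuousAt.comp hinv).tendsto
  rwa [Function.comp_apply, mix_zero] at h

theorem tendsto_dotProduct_valueFn_mix (hP : IsKernel P) (hγ0 : 0 ≤ γ) (hγ1 : γ < 1)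
    {π π' : S → A → ℝ} (hπ : IsPolicy π) (hπ' : IsPolicy π') (ν : S → ℝ) :
    Tendsto (fun α => (ν ⬝ᵥ valueFn P r γ (mix α π π') - ν ⬝ᵥ valueFn P r γ π) / α) (𝓝[>] 0)
      (𝓝 ((1 - γ)⁻¹ *
        (occ P γ ν π ⬝ᵥ (bellman P r γ π' (valueFn P r γ π) - valueFn P r γ π)))) := by
  set v := valueFn P r γ π
  set b := bellman P r γ π' v - v
  have hocc : Tendsto (fun α => (1 - γ)⁻¹ * (occ P γ ν (mix α π π') ⬝ᵥ b)) (𝓝[>] 0)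
      (𝓝 ((1 - γ)⁻¹ * (occ P γ ν π ⬝ᵥ b))) :=
    ((((continuous_id.dotProduct continuous_const).tendsto _).comp
      (tendsto_occ_mix hP hγ0 hγ1 hπ π' ν)).const_mul _).mono_left nhdsWithin_le_nhds
  refine hocc.congr' ?_
  filter_upwards [Ioo_mem_nhdsGT one_pos] with α ⟨hα0, hα1⟩
  have hb : bellman P r γ (mix α π π') v - v = α • b := by
    rw [bellman_mix, bellman_valueFn hP hγ0 hγ1 hπ]
    ext s
    simp only [b, Pi.sub_apply, Pi.add_apply, Pi.smul_apply, smul_eq_mul]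
    ring
  rw [← dotProduct_sub, performance_difference hP hγ0 hγ1 (hπ.mix hπ' hα0.le hα1.le), hb,
    dotProduct_smul, smul_eq_mul]
  field_simp

theorem valueFn_le_optBellman [Nonempty A] (hP : IsKernel P) (hγ0 : 0 ≤ γ) (hγ1 : γ < 1)
    (hρ : IsPolicy ρ) : valueFn P r γ ρ ≤ optBellman P r γ (valueFn P r γ ρ) := fun s => by
  conv_lhs => rw [← bellman_valueFn hP hγ0 hγ1 hρ]
  exact bellman_le_optBellman hρ _ s

noncomputable def greedyGap [Nonempty A] (P : S → A → S → ℝ) (r : S → A → ℝ) (γ : ℝ) (ν : S → ℝ)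
    (ρ ρ' : S → A → ℝ) : ℝ :=
  occ P γ ν ρ ⬝ᵥ (optBellman P r γ (valueFn P r γ ρ) - bellman P r γ ρ' (valueFn P r γ ρ))

theorem greedyGap_nonneg [Nonempty A] (hP : IsKernel P) (hγ0 : 0 ≤ γ) (hγ1 : γ < 1)
    {ν : S → ℝ} (hν : IsDist ν) {ρ' : S → A → ℝ} (hρ : IsPolicy ρ) (hρ' : IsPolicy ρ') :
    0 ≤ greedyGap P r γ ν ρ ρ' :=
  dotProduct_nonneg_of_nonneg (isDist_occ hP hγ0 hγ1 hρ hν).1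
    fun s => sub_nonneg.2 (bellman_le_optBellman hρ' _ s)

theorem greedyGap_le [Nonempty A] (hP : IsKernel P) (hγ0 : 0 ≤ γ) (hγ1 : γ < 1)
    {ν : S → ℝ} (hν : IsDist ν) {ρ' : S → A → ℝ} (hρ : IsPolicy ρ) (hρ' : IsPolicy ρ') :
    greedyGap P r γ ν ρ ρ' ≤ 2 * ‖r‖ / (1 - γ) := by
  refine (isDist_occ hP hγ0 hγ1 hρ hν).dotProduct_le fun s => ?_
  have hv := norm_valueFn_le (r := r) hP hγ0 hγ1 hρ
  have hK : ‖r‖ + γ * (‖r‖ / (1 - γ)) = ‖r‖ / (1 - γ) := by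
    have hne : 1 - γ ≠ 0 := by linarith
    field_simp
    ring
  calc _ ≤ 2 * (‖r‖ + γ * ‖valueFn P r γ ρ‖) := optBellman_sub_bellman_le hP hγ0 hρ' _ s
    _ ≤ 2 * (‖r‖ + γ * (‖r‖ / (1 - γ))) := by gcongr
    _ = 2 * ‖r‖ / (1 - γ) := by rw [hK, mul_div_assoc]

theorem le_greedyCplx [Nonempty A] (hP : IsKernel P) (hγ0 : 0 ≤ γ) (hγ1 : γ < 1)
    {Pol : Set (S → A → ℝ)} (hPol : ∀ ρ ∈ Pol, IsPolicy ρ) {ν : S → ℝ} (hν : IsDist ν)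
    {π : S → A → ℝ} (hπ : π ∈ Pol) {c : ℝ} (hc : ∀ ρ' ∈ Pol, c ≤ greedyGap P r γ ν π ρ') :
    c ≤ greedyCplx P r γ ν Pol := by
  have : Nonempty Pol := ⟨⟨π, hπ⟩⟩
  have hbdd : BddAbove (Set.range fun ρ : Pol => ⨅ ρ' : Pol, greedyGap P r γ ν ρ ρ') := by
    refine ⟨2 * ‖r‖ / (1 - γ), ?_⟩
    rintro _ ⟨ρ, rfl⟩
    refine (ciInf_le ⟨0, ?_⟩ ρ).trans (greedyGap_le hP hγ0 hγ1 hν (hPol ρ ρ.2) (hPol ρ ρ.2))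
    rintro _ ⟨ρ', rfl⟩
    exact greedyGap_nonneg hP hγ0 hγ1 hν (hPol ρ ρ.2) (hPol ρ' ρ'.2)
  exact le_ciSup_of_le hbdd ⟨π, hπ⟩ (le_ciInf fun ρ' => hc ρ' ρ'.2)

theorem IsLocalOpt.dotProduct_optBellman_sub_valueFn_le [Nonempty A] (hP : IsKernel P)
    (hγ0 : 0 ≤ γ) (hγ1 : γ < 1) {Pol : Set (S → A → ℝ)} (hPol : ∀ ρ ∈ Pol, IsPolicy ρ)
    {ν : S → ℝ} (hν : IsDist ν) {π : S → A → ℝ} (hπ : π ∈ Pol) {ε : ℝ}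
    (hloc : IsLocalOpt P r γ ν Pol π ε) :
    ν ⬝ᵥ (optBellman P r γ (valueFn P r γ π) - valueFn P r γ π)
      ≤ greedyCplx P r γ ν Pol / (1 - γ) + ε := by
  have hγ : 0 < 1 - γ := by linarith
  set v := valueFn P r γ π
  set w := optBellman P r γ v - v
  suffices (1 - γ) * (ν ⬝ᵥ w - ε) ≤ greedyCplx P r γ ν Pol by
    rw [← sub_le_iff_le_add, le_div_iff₀ hγ]
    linarith
  refine le_greedyCplx hP hγ0 hγ1 hPol hν hπ fun ρ' hρ' => ?_
  obtain ⟨L, hLε, hL⟩ := hloc ρ' hρ'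
  have hderiv := tendsto_nhds_unique hL
    (tendsto_dotProduct_valueFn_mix hP hγ0 hγ1 (hPol π hπ) (hPol ρ' hρ') ν)
  have hsplit : occ P γ ν π ⬝ᵥ w
      = greedyGap P r γ ν π ρ' + occ P γ ν π ⬝ᵥ (bellman P r γ ρ' v - v) := by
    rw [greedyGap, ← dotProduct_add, sub_add_sub_cancel]
  have hw : (1 - γ) * (ν ⬝ᵥ w) ≤ occ P γ ν π ⬝ᵥ w := by
    rw [← smul_eq_mul, ← smul_dotProduct]
    exact dotProduct_le_dotProduct_of_nonneg_right
      (one_sub_smul_le_occ hP hγ0 hγ1 (hPol π hπ) hν.1)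
      (sub_nonneg.2 (valueFn_le_optBellman hP hγ0 hγ1 (hPol π hπ)))
  rw [hderiv, inv_mul_le_iff₀ hγ] at hLε
  linarith

end MDP

theorem stmt_4_general {S A : Type*} [Fintype S] [Fintype A] [Nonempty A] [DecidableEq S]
    (P : S → A → S → ℝ) (hP : IsKernel P) (r : S → A → ℝ) (γ : ℝ)
    (hγ0 : 0 ≤ γ) (hγ1 : γ < 1)
    (Pol : Set (S → A → ℝ)) (hPol : ∀ ρ ∈ Pol, IsPolicy ρ)
    (ν : S → ℝ) (hν : IsDist ν) (ε : ℝ)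
    (π : S → A → ℝ) (hπ : π ∈ Pol)
    (hloc : IsLocalOpt P r γ ν Pol π ε)
    (πs : S → A → ℝ) (hπs : IsPolicy πs)
    (hopt : ∀ ρ : S → A → ℝ, IsPolicy ρ → ∀ s, valueFn P r γ ρ s ≤ valueFn P r γ πs s)
    (μ : S → ℝ) (hμ : IsDist μ)
    (C : ℝ) (hC : IsLeast {c : ℝ | ∀ s, occ P γ μ πs s ≤ c * ν s} C) :
    0 ≤ μ ⬝ᵥ (valueFn P r γ πs - valueFn P r γ π)
    ∧ μ ⬝ᵥ (valueFn P r γ πs - valueFn P r γ π)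
        ≤ (1 - γ)⁻¹ * C * (greedyCplx P r γ ν Pol / (1 - γ) + ε) := by
  set v := valueFn P r γ π
  set w := optBellman P r γ v - v
  have hπp : IsPolicy π := hPol π hπ
  have hw : 0 ≤ w := sub_nonneg.2 (valueFn_le_optBellman hP hγ0 hγ1 hπp)
  have hconc : occ P γ μ πs ≤ C • ν := hC.1
  have hC0 : 0 ≤ C := zero_le_one.trans ((isDist_occ hP hγ0 hγ1 hπs hμ).one_le_of_le_smul hν hconc)
  refine ⟨dotProduct_nonneg_of_nonneg hμ.1 fun s => sub_nonneg.2 (hopt π hπp s), ?_⟩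
  have hγinv : 0 ≤ (1 - γ)⁻¹ := inv_nonneg.2 (by linarith)
  calc μ ⬝ᵥ (valueFn P r γ πs - v)
      = (1 - γ)⁻¹ * (occ P γ μ πs ⬝ᵥ (bellman P r γ πs v - v)) :=
        performance_difference hP hγ0 hγ1 hπs μ
    _ ≤ (1 - γ)⁻¹ * (occ P γ μ πs ⬝ᵥ w) :=
        mul_le_mul_of_nonneg_left (dotProduct_le_dotProduct_of_nonneg_left
          (fun s => sub_le_sub_right (bellman_le_optBellman hπs v s) _)
          (isDist_occ hP hγ0 hγ1 hπs hμ).1) hγinv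
    _ ≤ (1 - γ)⁻¹ * (C * (ν ⬝ᵥ w)) := by
        rw [← smul_eq_mul C, ← smul_dotProduct]
        exact mul_le_mul_of_nonneg_left (dotProduct_le_dotProduct_of_nonneg_right hconc hw) hγinv
    _ ≤ (1 - γ)⁻¹ * (C * (greedyCplx P r γ ν Pol / (1 - γ) + ε)) :=
        mul_le_mul_of_nonneg_left (mul_le_mul_of_nonneg_left
          (hloc.dotProduct_optBellman_sub_valueFn_le hP hγ0 hγ1 hPol hν hπ) hC0) hγinv
    _ = (1 - γ)⁻¹ * C * (greedyCplx P r γ ν Pol / (1 - γ) + ε) := by ring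

/-- an `ε`-local optimum `π` of `J_ν` over a convex `Π` satisfies the global
guarantee `0 ≤ μ·(v_* - v_π) ≤ (1-γ)⁻¹ ‖d_{μ,π_*}/ν‖_∞ (E_ν(Π)/(1-γ) + ε)`. -/
theorem stmt_4 {S A : Type*} [Fintype S] [Fintype A] [Nonempty S] [Nonempty A] [DecidableEq S]
    (P : S → A → S → ℝ) (hP : IsKernel P) (r : S → A → ℝ) (γ : ℝ)
    (hγ0 : 0 ≤ γ) (hγ1 : γ < 1)
    (Pol : Set (S → A → ℝ)) (hPol : ∀ ρ ∈ Pol, IsPolicy ρ)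
    (hconv : ∀ ρ ∈ Pol, ∀ ρ' ∈ Pol, ∀ α : ℝ, 0 ≤ α → α ≤ 1 → mix α ρ ρ' ∈ Pol)
    (ν : S → ℝ) (hν : IsDist ν) (ε : ℝ) (hε : 0 ≤ ε)
    (π : S → A → ℝ) (hπ : π ∈ Pol)
    (hloc : IsLocalOpt P r γ ν Pol π ε)
    (πs : S → A → ℝ) (hπs : IsPolicy πs)
    (hopt : ∀ ρ : S → A → ℝ, IsPolicy ρ → ∀ s, valueFn P r γ ρ s ≤ valueFn P r γ πs s)
    (μ : S → ℝ) (hμ : IsDist μ)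
    (C : ℝ) (hC : IsLeast {c : ℝ | ∀ s, occ P γ μ πs s ≤ c * ν s} C) :
    0 ≤ μ ⬝ᵥ (valueFn P r γ πs - valueFn P r γ π)
    ∧ μ ⬝ᵥ (valueFn P r γ πs - valueFn P r γ π)
        ≤ (1 - γ)⁻¹ * C * (greedyCplx P r γ ν Pol / (1 - γ) + ε) :=
  stmt_4_general P hP r γ hγ0 hγ1 Pol hPol ν hν ε π hπ hloc πs hπs hopt μ hμ C hC
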